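/- In the cut-vertex setup, assume H̄ satisfies the bunkbed conjecture and let μ be a symmetric weight on F. Then for every x, y ∈ V(H̄), P_{F,μ}(x⁻ ∼_F y⁺) ≤ P_{F,μ}(x⁻ ∼_F y⁻). -/

import Mathlib

open Classical

noncomputable def edgeFin {V : Type*} [Fintype V] (G : SimpleGraph V) : Finset (Sym2 V) :=
  G.edgeSet.toFinset

noncomputable def percWeight {V : Type*} [Fintype V] (G : SimpleGraph V)
    (μ : Sym2 V → ℝ) (K : Finset (Sym2 V)) : ℝ :=
  (∏ e ∈ K, μ e) * ∏ e ∈ edgeFin G \ K, (1 - μ e)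

noncomputable def percProb {V : Type*} [Fintype V] (G : SimpleGraph V)
    (μ : Sym2 V → ℝ) (A : Finset (Sym2 V) → Prop) : ℝ :=
  ∑ K ∈ (edgeFin G).powerset, if A K then percWeight G μ K else 0

def ConnIn {V : Type*} (K : Finset (Sym2 V)) (x y : V) : Prop :=
  (SimpleGraph.fromEdgeSet (↑K : Set (Sym2 V))).Reachable x y

def IsWeight {V : Type*} (G : SimpleGraph V) (μ : Sym2 V → ℝ) : Prop :=
  ∀ e ∈ G.edgeSet, 0 ≤ μ e ∧ μ e ≤ 1

def BB {V : Type*} (G : SimpleGraph V) : SimpleGraph (V × Bool) :=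
  G.boxProd ⊤

def IsSymWeight {V : Type*} (G : SimpleGraph V) (μ : Sym2 (V × Bool) → ℝ) : Prop :=
  ∀ x y : V, G.Adj x y →
    μ s((x, false), (y, false)) = μ s((x, true), (y, true))

def SatisfiesBunkbed {V : Type*} [Fintype V] (G : SimpleGraph V) : Prop :=
  ∀ μ : Sym2 (V × Bool) → ℝ, IsWeight (BB G) μ → IsSymWeight G μ →
    ∀ x y : V,
      percProb (BB G) μ (fun K => ConnIn K (x, false) (y, true)) ≤
        percProb (BB G) μ (fun K => ConnIn K (x, false) (y, false))

def restrict {V : Type*} (G : SimpleGraph V) (S : Set V) : SimpleGraph V where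
  Adj x y := G.Adj x y ∧ x ∈ S ∧ y ∈ S
  symm := ⟨fun x y h => ⟨h.1.symm, h.2.2, h.2.1⟩⟩
  loopless := ⟨fun x h => G.loopless.irrefl x h.1⟩

def IsCutVertex {V : Type*} (G : SimpleGraph V) (v : V) : Prop :=
  ∃ x y : ({u | u ≠ v} : Set V),
    G.Reachable x.1 y.1 ∧ ¬ (G.induce {u | u ≠ v}).Reachable x y

/-- The copy of `BB (F̄[S])` sitting inside `BB F̄` (as a spanning subgraph on `V × Bool`):
its edges are the two horizontal copies of the edges of `F̄` inside `S`, together with the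
vertical edges at the vertices of `S`. -/
def bbSide {V : Type*} (Fbar : SimpleGraph V) (S : Set V) : SimpleGraph (V × Bool) :=
  restrict (BB Fbar) {p : V × Bool | p.1 ∈ S}

/-- `H₀`: the graph `H = BB (F̄[T])` with the vertical edge `v⁻v⁺` deleted. -/
def bbSideDel {V : Type*} (Fbar : SimpleGraph V) (T : Set V) (v : V) :
    SimpleGraph (V × Bool) :=
  (bbSide Fbar T).deleteEdges {s((v, false), (v, true))}

/-! ### Instance-pinned set operations on edge sets.

These reducible abbreviations fix the `DecidableEq` instances at a fully generic
definition site, so that they agree (definitionally) with the instances appearing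
inside `percWeight`/`percProb`. -/

noncomputable abbrev eUnion {W : Type*} (A B : Finset (Sym2 W)) : Finset (Sym2 W) := A ∪ B

noncomputable abbrev eInsert {W : Type*} (e : Sym2 W) (A : Finset (Sym2 W)) : Finset (Sym2 W) := insert e A

noncomputable abbrev eErase {W : Type*} (A : Finset (Sym2 W)) (e : Sym2 W) : Finset (Sym2 W) := A.erase e

noncomputable abbrev eImageS {α β : Type*} (f : α → β) (A : Finset (Sym2 α)) : Finset (Sym2 β) :=
  A.image (Sym2.map f)

/-! ### Auxiliary lemmas -/

section Aux

variable {V : Type*}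

lemma connIn_refl (K : Finset (Sym2 V)) (x : V) : ConnIn K x x :=
  SimpleGraph.Reachable.refl x

theorem ConnIn.trans {K : Finset (Sym2 V)} {x y z : V}
    (h : ConnIn K x y) (h' : ConnIn K y z) : ConnIn K x z :=
  SimpleGraph.Reachable.trans h h'

theorem ConnIn.symm {K : Finset (Sym2 V)} {x y : V}
    (h : ConnIn K x y) : ConnIn K y x :=
  SimpleGraph.Reachable.symm h

lemma connIn_of_mem {K : Finset (Sym2 V)} {x y : V} (h : s(x, y) ∈ K) (hne : x ≠ y) :
    ConnIn K x y :=
  ((SimpleGraph.fromEdgeSet_adj _).mpr ⟨by exact_mod_cast h, hne⟩).reachable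

lemma ConnIn.mono {K K' : Finset (Sym2 V)} (h : K ⊆ K') {x y : V} (hc : ConnIn K x y) :
    ConnIn K' x y :=
  SimpleGraph.Reachable.mono (SimpleGraph.fromEdgeSet_mono (by exact_mod_cast h)) hc

lemma reachable_of_forall_adj {A : Set (Sym2 V)} {G : SimpleGraph V}
    (h : ∀ x y : V, (SimpleGraph.fromEdgeSet A).Adj x y → G.Reachable x y) {x y : V}
    (hr : (SimpleGraph.fromEdgeSet A).Reachable x y) : G.Reachable x y := by
  obtain ⟨w⟩ := hr
  induction w with
  | nil => exact SimpleGraph.Reachable.refl _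
  | cons hadj _ ih => exact (h _ _ hadj).trans ih

lemma connIn_image_aux {α β : Type*} {f : α → β} (hf : Function.Injective f)
    (A : Finset (Sym2 α)) :
    ∀ {p q : β},
      (SimpleGraph.fromEdgeSet (↑(eImageS f A) : Set (Sym2 β))).Walk p q →
      ∀ a : α, p = f a → ∀ b : α, q = f b → ConnIn A a b := by
  intro p q w
  induction w with
  | nil =>
    intro a ha b hb
    obtain rfl : a = b := hf (ha.symm.trans hb)
    exact connIn_refl A a
  | @cons p p' q hadj w' ih =>
    intro a ha b hb
    subst ha
    rw [SimpleGraph.fromEdgeSet_adj] at hadj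
    obtain ⟨hmem, hne⟩ := hadj
    rw [Finset.mem_coe, Finset.mem_image] at hmem
    obtain ⟨e, he, hmap⟩ := hmem
    induction e using Sym2.ind with
    | _ u w'' =>
      rw [Sym2.map_pair_eq, Sym2.eq_iff] at hmap
      rcases hmap with ⟨h1, h2⟩ | ⟨h1, h2⟩
      · have hua : u = a := hf h1
        subst hua
        have hne' : u ≠ w'' := by rintro rfl; exact hne h2
        exact (connIn_of_mem he hne').trans (ih w'' h2.symm b hb)
      · have hwa : w'' = a := hf h2
        subst hwa
        rw [Sym2.eq_swap] at he
        have hne' : w'' ≠ u := by rintro rfl; exact hne h1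
        exact (connIn_of_mem he hne').trans (ih u h1.symm b hb)

lemma connIn_image_iff {α β : Type*} {f : α → β} (hf : Function.Injective f)
    (A : Finset (Sym2 α)) (a b : α) :
    ConnIn (eImageS f A) (f a) (f b) ↔ ConnIn A a b := by
  constructor
  · intro h
    obtain ⟨w⟩ := h
    exact connIn_image_aux hf A w a rfl b rfl
  · intro h
    obtain ⟨w⟩ := h
    induction w with
    | nil => exact connIn_refl _ _
    | @cons u c d hadj w' ih =>
      refine ConnIn.trans (connIn_of_mem ?_ fun hc => hadj.ne (hf hc)) ih
      rw [Finset.mem_image]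
      exact ⟨s(u, c), by exact_mod_cast hadj.1, Sym2.map_pair_eq f u c⟩

lemma sum_powerset_union_disj {α : Type*} [DecidableEq α] {s t : Finset α}
    (h : Disjoint s t) {M : Type*} [AddCommMonoid M] (f : Finset α → M) :
    ∑ K ∈ (s ∪ t).powerset, f K = ∑ K1 ∈ s.powerset, ∑ K2 ∈ t.powerset, f (K1 ∪ K2) := by
  have hrec : ∀ K : Finset α, K ⊆ s ∪ t → K ∩ s ∪ K ∩ t = K := by
    intro K hK
    rw [← Finset.inter_union_distrib_left]
    exact Finset.inter_eq_left.mpr hK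
  rw [← Finset.sum_product']
  refine Finset.sum_nbij' (fun K => (K ∩ s, K ∩ t)) (fun P => P.1 ∪ P.2) ?_ ?_ ?_ ?_ ?_
  · intro K hK
    rw [Finset.mem_product]
    exact ⟨Finset.mem_powerset.mpr Finset.inter_subset_right,
      Finset.mem_powerset.mpr Finset.inter_subset_right⟩
  · intro P hP
    rw [Finset.mem_product] at hP
    exact Finset.mem_powerset.mpr
      (Finset.union_subset_union (Finset.mem_powerset.mp hP.1) (Finset.mem_powerset.mp hP.2))
  · intro K hK
    exact hrec K (Finset.mem_powerset.mp hK)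
  · intro P hP
    rw [Finset.mem_product, Finset.mem_powerset, Finset.mem_powerset] at hP
    show ((P.1 ∪ P.2) ∩ s, (P.1 ∪ P.2) ∩ t) = P
    have h1 : P.2 ∩ s = ∅ := by
      apply Finset.eq_empty_of_forall_notMem
      intro e he
      rw [Finset.mem_inter] at he
      exact Finset.disjoint_left.mp h he.2 (hP.2 he.1)
    have h2 : P.1 ∩ t = ∅ := by
      apply Finset.eq_empty_of_forall_notMem
      intro e he
      rw [Finset.mem_inter] at he
      exact Finset.disjoint_left.mp h (hP.1 he.1) he.2
    rw [Finset.union_inter_distrib_right, Finset.union_inter_distrib_right,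
      Finset.inter_eq_left.mpr hP.1, Finset.inter_eq_left.mpr hP.2, h1, h2,
      Finset.union_empty, Finset.empty_union]
  · intro K hK
    show f K = f (K ∩ s ∪ K ∩ t)
    rw [hrec K (Finset.mem_powerset.mp hK)]

lemma sum_powerset_eUnion_disj {W : Type*} {A B : Finset (Sym2 W)}
    (h : Disjoint A B) {M : Type*} [AddCommMonoid M] (f : Finset (Sym2 W) → M) :
    ∑ K ∈ (eUnion A B).powerset, f K
      = ∑ K1 ∈ A.powerset, ∑ K2 ∈ B.powerset, f (eUnion K1 K2) :=
  sum_powerset_union_disj h f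

end Aux

section CrossConn

variable {V : Type*} {v : V} {S T : Set V}

/-- The key connectivity lemma: for `p, q` on the `T` side, connectivity in `K1 ∪ K2`
is equivalent to connectivity in `K2` augmented by the vertical edge at `v` whenever
`K1` connects `(v,false)` to `(v,true)`. -/
lemma cross_conn_aux
    (hST : S ∩ T = {v}) (hUnion : S ∪ T = Set.univ)
    (K1 K2 : Finset (Sym2 (V × Bool)))
    (hK1 : ∀ a b : V × Bool, s(a, b) ∈ K1 → a.1 ∈ S ∧ b.1 ∈ S)
    (hK2 : ∀ a b : V × Bool, s(a, b) ∈ K2 → a.1 ∈ T ∧ b.1 ∈ T)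
    (D : Finset (Sym2 (V × Bool)))
    (hD1 : ConnIn K1 (v, false) (v, true) → D = {s((v, false), (v, true))})
    {p q : V × Bool}
    (w : (SimpleGraph.fromEdgeSet (↑(eUnion K1 K2) : Set (Sym2 (V × Bool)))).Walk p q) :
    ((p.1 ∈ T → q.1 ∈ T → ConnIn (eUnion K2 D) p q) ∧
     (p.1 ∈ T → q.1 ∉ T → ∃ β, ConnIn (eUnion K2 D) p (v, β) ∧ ConnIn K1 (v, β) q) ∧
     (p.1 ∉ T → q.1 ∈ T → ∃ β, ConnIn K1 p (v, β) ∧ ConnIn (eUnion K2 D) (v, β) q) ∧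
     (p.1 ∉ T → q.1 ∉ T → (ConnIn K1 p q ∨
        ∃ β γ, ConnIn K1 p (v, β) ∧ ConnIn (eUnion K2 D) (v, β) (v, γ) ∧ ConnIn K1 (v, γ) q))) := by
  letI : DecidableEq (V × Bool) := fun a b => Classical.propDecidable _
  have eqv : ∀ {a : V}, a ∈ S → a ∈ T → a = v := by
    intro a hs ht
    have : a ∈ S ∩ T := ⟨hs, ht⟩
    rw [hST] at this
    exact this
  have bridge : ∀ β γ : Bool, ConnIn K1 (v, β) (v, γ) → ConnIn (eUnion K2 D) (v, β) (v, γ) := by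
    intro β γ hk
    by_cases hβγ : β = γ
    · subst hβγ; exact connIn_refl _ _
    · have hR : ConnIn K1 (v, false) (v, true) := by
        cases β <;> cases γ
        · exact absurd rfl hβγ
        · exact hk
        · exact hk.symm
        · exact absurd rfl hβγ
      have hmem : s((v, false), (v, true)) ∈ eUnion K2 D := by
        rw [hD1 hR]; exact Finset.mem_union_right _ (Finset.mem_singleton_self _)
      have hc : ConnIn (eUnion K2 D) (v, false) (v, true) :=
        connIn_of_mem hmem (by simp)
      cases β <;> cases γ
      · exact absurd rfl hβγ
      · exact hc
      · exact hc.symm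
      · exact absurd rfl hβγ
  induction w with
  | nil =>
    exact ⟨fun _ _ => connIn_refl _ _, fun h1 h2 => absurd h1 h2,
      fun h1 h2 => absurd h2 h1, fun _ _ => Or.inl (connIn_refl _ _)⟩
  | @cons p p' q hadj w' ih =>
    rw [SimpleGraph.fromEdgeSet_adj] at hadj
    obtain ⟨hmem, hne⟩ := hadj
    rw [Finset.mem_coe, Finset.mem_union] at hmem
    rcases hmem with h1 | h2
    · -- the edge p p' lies in K1
      have hpS : p.1 ∈ S := (hK1 _ _ h1).1
      have hp'S : p'.1 ∈ S := (hK1 _ _ h1).2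
      have k : ConnIn K1 p p' := connIn_of_mem h1 hne
      by_cases hp'T : p'.1 ∈ T
      · have hp'eq : p' = (v, p'.2) := Prod.ext (eqv hp'S hp'T) rfl
        by_cases hpT : p.1 ∈ T
        · have hpeq : p = (v, p.2) := Prod.ext (eqv hpS hpT) rfl
          have r : ConnIn (eUnion K2 D) p p' := by
            rw [hpeq, hp'eq] at k ⊢
            exact bridge _ _ k
          refine ⟨fun _ hq => r.trans (ih.1 hp'T hq), fun _ hq => ?_,
            fun hp _ => absurd hpT hp, fun hp _ => absurd hpT hp⟩
          obtain ⟨β, r2, k2⟩ := ih.2.1 hp'T hq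
          exact ⟨β, r.trans r2, k2⟩
        · refine ⟨fun hp _ => absurd hp hpT, fun hp _ => absurd hp hpT,
            fun _ hq => ?_, fun _ hq => ?_⟩
          · refine ⟨p'.2, ?_, ?_⟩
            · rw [← hp'eq]; exact k
            · rw [← hp'eq]; exact ih.1 hp'T hq
          · obtain ⟨δ, r2, k2⟩ := ih.2.1 hp'T hq
            refine Or.inr ⟨p'.2, δ, ?_, ?_, k2⟩
            · rw [← hp'eq]; exact k
            · rw [← hp'eq]; exact r2
      · by_cases hpT : p.1 ∈ T
        · have hpeq : p = (v, p.2) := Prod.ext (eqv hpS hpT) rfl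
          rw [hpeq] at k
          refine ⟨fun _ hq => ?_, fun _ hq => ?_,
            fun hp _ => absurd hpT hp, fun hp _ => absurd hpT hp⟩
          · obtain ⟨γ, k2, r2⟩ := ih.2.2.1 hp'T hq
            rw [hpeq]
            exact (bridge _ _ (k.trans k2)).trans r2
          · rcases ih.2.2.2 hp'T hq with kpq | ⟨β, γ, k2, r2, k3⟩
            · refine ⟨p.2, ?_, ?_⟩
              · rw [hpeq]; exact connIn_refl _ _
              · exact k.trans kpq
            · refine ⟨γ, ?_, k3⟩
              rw [hpeq]
              exact (bridge _ _ (k.trans k2)).trans r2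
        · refine ⟨fun hp _ => absurd hp hpT, fun hp _ => absurd hp hpT,
            fun _ hq => ?_, fun _ hq => ?_⟩
          · obtain ⟨γ, k2, r2⟩ := ih.2.2.1 hp'T hq
            exact ⟨γ, k.trans k2, r2⟩
          · rcases ih.2.2.2 hp'T hq with kpq | ⟨β, γ, k2, r2, k3⟩
            · exact Or.inl (k.trans kpq)
            · exact Or.inr ⟨β, γ, k.trans k2, r2, k3⟩
    · -- the edge p p' lies in K2
      have hpT : p.1 ∈ T := (hK2 _ _ h2).1
      have hp'T : p'.1 ∈ T := (hK2 _ _ h2).2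
      have r : ConnIn (eUnion K2 D) p p' :=
        connIn_of_mem (Finset.mem_union_left _ h2) hne
      refine ⟨fun _ hq => r.trans (ih.1 hp'T hq), fun _ hq => ?_,
        fun hp _ => absurd hpT hp, fun hp _ => absurd hpT hp⟩
      obtain ⟨β, r2, k2⟩ := ih.2.1 hp'T hq
      exact ⟨β, r.trans r2, k2⟩

lemma cross_conn
    (hST : S ∩ T = {v}) (hUnion : S ∪ T = Set.univ)
    (K1 K2 : Finset (Sym2 (V × Bool)))
    (hK1 : ∀ a b : V × Bool, s(a, b) ∈ K1 → a.1 ∈ S ∧ b.1 ∈ S)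
    (hK2 : ∀ a b : V × Bool, s(a, b) ∈ K2 → a.1 ∈ T ∧ b.1 ∈ T)
    (D : Finset (Sym2 (V × Bool)))
    (hD1 : ConnIn K1 (v, false) (v, true) → D = {s((v, false), (v, true))})
    (hD2 : ¬ ConnIn K1 (v, false) (v, true) → D = ∅)
    {p q : V × Bool} (hp : p.1 ∈ T) (hq : q.1 ∈ T) :
    ConnIn (eUnion K1 K2) p q ↔ ConnIn (eUnion K2 D) p q := by
  letI : DecidableEq (V × Bool) := fun a b => Classical.propDecidable _
  constructor
  · intro h
    obtain ⟨w⟩ := h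
    exact (cross_conn_aux hST hUnion K1 K2 hK1 hK2 D hD1 w).1 hp hq
  · intro h
    refine reachable_of_forall_adj ?_ h
    intro a b hab
    rw [SimpleGraph.fromEdgeSet_adj] at hab
    obtain ⟨hmem, hne⟩ := hab
    rw [Finset.mem_coe, Finset.mem_union] at hmem
    rcases hmem with h2 | hD
    · exact connIn_of_mem (Finset.mem_union_right _ h2) hne
    · by_cases hR : ConnIn K1 (v, false) (v, true)
      · rw [hD1 hR, Finset.mem_singleton] at hD
        have hR' : ConnIn (K1 ∪ K2) (v, false) (v, true) :=
          hR.mono Finset.subset_union_left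
        rw [Sym2.eq_iff] at hD
        rcases hD with ⟨rfl, rfl⟩ | ⟨rfl, rfl⟩
        · exact hR'
        · exact hR'.symm
      · rw [hD2 hR] at hD
        exact absurd hD (Finset.notMem_empty _)

end CrossConn

/-! ### Edge set structure -/

section Edges

variable {V : Type*} [Fintype V]

lemma mem_edgeFin {G : SimpleGraph V} {e : Sym2 V} : e ∈ edgeFin G ↔ e ∈ G.edgeSet :=
  Set.mem_toFinset

lemma mem_edgeFin_pair {G : SimpleGraph V} {a b : V} : s(a, b) ∈ edgeFin G ↔ G.Adj a b := by
  rw [mem_edgeFin, SimpleGraph.mem_edgeSet]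

lemma bbSideDel_adj {Fbar : SimpleGraph V} {T : Set V} {v : V} {a b : V × Bool} :
    (bbSideDel Fbar T v).Adj a b ↔ (bbSide Fbar T).Adj a b ∧
      s(a, b) ∉ ({s((v, false), (v, true))} : Set (Sym2 (V × Bool))) := by
  unfold bbSideDel
  exact SimpleGraph.deleteEdges_adj

lemma edge_partition {Fbar : SimpleGraph V} {v : V} {S T : Set V}
    (hST : S ∩ T = {v}) (hUnion : S ∪ T = Set.univ)
    (hSep : ∀ x ∈ S, ∀ y ∈ T, Fbar.Adj x y → x = v ∨ y = v)
    (hvS : v ∈ S) (hvT : v ∈ T) :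
    edgeFin (BB Fbar) = eUnion (edgeFin (bbSide Fbar S)) (edgeFin (bbSideDel Fbar T v)) := by
  letI : DecidableEq (V × Bool) := fun a b => Classical.propDecidable _
  have memST : ∀ a : V, a ∈ S ∪ T := fun a => by rw [hUnion]; trivial
  have not_ve : ∀ a b : V × Bool, Fbar.Adj a.1 b.1 →
      s(a, b) ∉ ({s((v, false), (v, true))} : Set (Sym2 (V × Bool))) := by
    intro a b hF hmem
    rw [Set.mem_singleton_iff, Sym2.eq_iff] at hmem
    rcases hmem with ⟨h1, h2⟩ | ⟨h1, h2⟩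
    · rw [h1, h2] at hF; exact Fbar.loopless.irrefl v hF
    · rw [h1, h2] at hF; exact Fbar.loopless.irrefl v hF
  ext e
  induction e using Sym2.ind with
  | _ a b =>
    rw [Finset.mem_union, mem_edgeFin_pair, mem_edgeFin_pair, mem_edgeFin_pair]
    constructor
    · intro hadj
      rcases SimpleGraph.boxProd_adj.mp hadj with ⟨hF, h2⟩ | ⟨h2, h1⟩
      · -- horizontal edge
        by_cases haS : a.1 ∈ S
        · by_cases hbS : b.1 ∈ S
          · exact Or.inl ⟨hadj, haS, hbS⟩
          · have hbT : b.1 ∈ T := (memST b.1).resolve_left hbS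
            rcases hSep a.1 haS b.1 hbT hF with hv1 | hv1
            · have haT : a.1 ∈ T := hv1 ▸ hvT
              exact Or.inr (bbSideDel_adj.mpr
                ⟨⟨hadj, haT, hbT⟩, not_ve a b hF⟩)
            · exact absurd (hv1 ▸ hvS) hbS
        · have haT : a.1 ∈ T := (memST a.1).resolve_left haS
          by_cases hbT : b.1 ∈ T
          · exact Or.inr (bbSideDel_adj.mpr
              ⟨⟨hadj, haT, hbT⟩, not_ve a b hF⟩)
          · have hbS : b.1 ∈ S := (memST b.1).resolve_right hbT
            rcases hSep b.1 hbS a.1 haT hF.symm with hv1 | hv1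
            · exact absurd (hv1 ▸ hvT) hbT
            · exact absurd (hv1 ▸ hvS) haS
      · -- vertical edge
        by_cases haS : a.1 ∈ S
        · exact Or.inl ⟨hadj, haS, show b.1 ∈ S from h1 ▸ haS⟩
        · have haT : a.1 ∈ T := (memST a.1).resolve_left haS
          have hbT : b.1 ∈ T := h1 ▸ haT
          refine Or.inr (bbSideDel_adj.mpr ⟨⟨hadj, haT, hbT⟩, ?_⟩)
          intro hmem
          rw [Set.mem_singleton_iff, Sym2.eq_iff] at hmem
          rcases hmem with ⟨hh1, hh2⟩ | ⟨hh1, hh2⟩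
          · exact haS (by rw [hh1]; exact hvS)
          · exact haS (by rw [hh1]; exact hvS)
    · rintro (h | h)
      · exact h.1
      · exact (bbSideDel_adj.mp h).1.1

lemma edge_disjoint {Fbar : SimpleGraph V} {v : V} {S T : Set V}
    (hST : S ∩ T = {v}) :
    Disjoint (edgeFin (bbSide Fbar S)) (edgeFin (bbSideDel Fbar T v)) := by
  rw [Finset.disjoint_left]
  intro e h1 h2
  induction e using Sym2.ind with
  | _ a b =>
    rw [mem_edgeFin_pair] at h1 h2
    have h2' := bbSideDel_adj.mp h2
    have haST : a.1 ∈ S ∩ T := ⟨h1.2.1, h2'.1.2.1⟩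
    have hbST : b.1 ∈ S ∩ T := ⟨h1.2.2, h2'.1.2.2⟩
    rw [hST, Set.mem_singleton_iff] at haST hbST
    rcases SimpleGraph.boxProd_adj.mp h1.1 with ⟨hF, _⟩ | ⟨hne, _⟩
    · rw [haST, hbST] at hF
      exact Fbar.loopless.irrefl v hF
    · apply h2'.2
      rw [Set.mem_singleton_iff]
      have hne' : a.2 ≠ b.2 := hne
      have ha : a = (v, a.2) := Prod.ext haST rfl
      have hb : b = (v, b.2) := Prod.ext hbST rfl
      rw [ha, hb]
      cases hA : a.2 <;> cases hB : b.2
      · exact absurd (hA.trans hB.symm) hne'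
      · rfl
      · exact Sym2.eq_swap
      · exact absurd (hA.trans hB.symm) hne'

lemma percWeight_union_eq {G G1 G2 : SimpleGraph V}
    (hE : edgeFin G = eUnion (edgeFin G1) (edgeFin G2))
    (hd : Disjoint (edgeFin G1) (edgeFin G2))
    (μ : Sym2 V → ℝ) {K1 K2 : Finset (Sym2 V)}
    (h1 : K1 ⊆ edgeFin G1) (h2 : K2 ⊆ edgeFin G2) :
    percWeight G μ (eUnion K1 K2) = percWeight G1 μ K1 * percWeight G2 μ K2 := by
  have hdK : Disjoint K1 K2 := hd.mono h1 h2
  have hs : edgeFin G \ (eUnion K1 K2) = (edgeFin G1 \ K1) ∪ (edgeFin G2 \ K2) := by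
    rw [hE]
    ext e
    simp only [Finset.mem_sdiff, Finset.mem_union, not_or]
    constructor
    · rintro ⟨h | h, hn1, hn2⟩
      · exact Or.inl ⟨h, hn1⟩
      · exact Or.inr ⟨h, hn2⟩
    · rintro (⟨h, hn⟩ | ⟨h, hn⟩)
      · exact ⟨Or.inl h, hn, fun hc => Finset.disjoint_left.mp hd h (h2 hc)⟩
      · exact ⟨Or.inr h, fun hc => Finset.disjoint_right.mp hd h (h1 hc), hn⟩
  have hds : Disjoint (edgeFin G1 \ K1) (edgeFin G2 \ K2) :=
    hd.mono Finset.sdiff_subset Finset.sdiff_subset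
  unfold percWeight
  rw [Finset.prod_union hdK, hs, Finset.prod_union hds]
  ring

lemma percWeight_nonneg {G G1 : SimpleGraph V}
    (hsub : edgeFin G1 ⊆ edgeFin G) {μ : Sym2 V → ℝ} (hμ : IsWeight G μ)
    {K : Finset (Sym2 V)} (hK : K ⊆ edgeFin G1) :
    0 ≤ percWeight G1 μ K := by
  unfold percWeight
  apply mul_nonneg
  · apply Finset.prod_nonneg
    intro e he
    exact (hμ e (mem_edgeFin.mp (hsub (hK he)))).1
  · apply Finset.prod_nonneg
    intro e he
    have := (hμ e (mem_edgeFin.mp (hsub (Finset.sdiff_subset he)))).2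
    linarith

end Edges

/-! ### Transfer to the bunkbed graph of the induced subgraph -/

def iotaT {V : Type*} (T : Set V) : (↥T × Bool) → (V × Bool) := fun p => (p.1.1, p.2)

lemma iotaT_inj {V : Type*} (T : Set V) : Function.Injective (iotaT T) := by
  rintro ⟨⟨a, ha⟩, b⟩ ⟨⟨c, hc⟩, d⟩ h
  simp only [iotaT, Prod.mk.injEq] at h
  obtain ⟨h1, h2⟩ := h
  subst h2
  exact Prod.ext (Subtype.ext h1) rfl

lemma image_edgeFin_eq {V : Type*} [Fintype V] (Fbar : SimpleGraph V) (T : Set V) :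
    eImageS (iotaT T) (edgeFin (BB (Fbar.induce T))) = edgeFin (bbSide Fbar T) := by
  letI : DecidableEq (V × Bool) := fun a b => Classical.propDecidable _
  ext e
  constructor
  · intro he
    rw [Finset.mem_image] at he
    obtain ⟨e', he', rfl⟩ := he
    induction e' using Sym2.ind with
    | _ p q =>
      rw [mem_edgeFin_pair] at he'
      rw [Sym2.map_pair_eq, mem_edgeFin_pair]
      rcases SimpleGraph.boxProd_adj.mp he' with ⟨hF, h2⟩ | ⟨h2, h1⟩
      · have hF' : Fbar.Adj p.1.1 q.1.1 := hF
        exact ⟨SimpleGraph.boxProd_adj.mpr (Or.inl ⟨hF', h2⟩), p.1.2, q.1.2⟩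
      · exact ⟨SimpleGraph.boxProd_adj.mpr (Or.inr ⟨h2, congrArg Subtype.val h1⟩),
          p.1.2, q.1.2⟩
  · intro he
    induction e using Sym2.ind with
    | _ a b =>
      rw [mem_edgeFin_pair] at he
      obtain ⟨hBB, haT, hbT⟩ := he
      rw [Finset.mem_image]
      refine ⟨s(((⟨a.1, haT⟩ : T), a.2), ((⟨b.1, hbT⟩ : T), b.2)), ?_, ?_⟩
      · rw [mem_edgeFin_pair]
        rcases SimpleGraph.boxProd_adj.mp hBB with ⟨hF, h2⟩ | ⟨h2, h1⟩
        · exact SimpleGraph.boxProd_adj.mpr (Or.inl ⟨hF, h2⟩)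
        · exact SimpleGraph.boxProd_adj.mpr (Or.inr ⟨h2, Subtype.ext h1⟩)
      · rw [Sym2.map_pair_eq]
        rfl

lemma edgeFin_bbSideDel {V : Type*} [Fintype V] (Fbar : SimpleGraph V) (T : Set V) (v : V) :
    edgeFin (bbSideDel Fbar T v)
      = eErase (edgeFin (bbSide Fbar T)) s((v, false), (v, true)) := by
  letI : DecidableEq (V × Bool) := fun a b => Classical.propDecidable _
  ext e
  induction e using Sym2.ind with
  | _ a b =>
    rw [Finset.mem_erase, mem_edgeFin_pair, mem_edgeFin_pair, bbSideDel_adj,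
      Set.mem_singleton_iff]
    tauto

noncomputable def nuW {V : Type*} (T : Set V) (v : V) (hv : v ∈ T)
    (μ : Sym2 (V × Bool) → ℝ) (c : ℝ) : Sym2 (↥T × Bool) → ℝ :=
  fun e => if e = s(((⟨v, hv⟩ : T), false), ((⟨v, hv⟩ : T), true)) then c
    else μ (Sym2.map (iotaT T) e)

lemma nuW_isWeight {V : Type*} [Fintype V] (Fbar : SimpleGraph V) (T : Set V) (v : V)
    (hvT : v ∈ T) (μ : Sym2 (V × Bool) → ℝ) (hμ : IsWeight (BB Fbar) μ)
    (c : ℝ) (hc : 0 ≤ c ∧ c ≤ 1) :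
    IsWeight (BB (Fbar.induce T)) (nuW T v hvT μ c) := by
  letI : DecidableEq (V × Bool) := fun a b => Classical.propDecidable _
  intro e he
  unfold nuW
  by_cases hveq : e = s(((⟨v, hvT⟩ : T), false), ((⟨v, hvT⟩ : T), true))
  · rw [if_pos hveq]; exact hc
  · rw [if_neg hveq]
    apply hμ
    have h1 : Sym2.map (iotaT T) e ∈ edgeFin (bbSide Fbar T) := by
      rw [← image_edgeFin_eq]
      exact Finset.mem_image_of_mem _ (mem_edgeFin.mpr he)
    have h2 := mem_edgeFin.mp h1
    have hle : bbSide Fbar T ≤ BB Fbar := by intro a b h; exact h.1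
    exact SimpleGraph.edgeSet_mono hle h2

lemma nuW_isSym {V : Type*} (Fbar : SimpleGraph V) (T : Set V) (v : V)
    (hvT : v ∈ T) (μ : Sym2 (V × Bool) → ℝ) (hsym : IsSymWeight Fbar μ) (c : ℝ) :
    IsSymWeight (Fbar.induce T) (nuW T v hvT μ c) := by
  intro a b hab
  unfold nuW
  have h1 : s(((a : ↥T), false), ((b : ↥T), false))
      ≠ s(((⟨v, hvT⟩ : T), false), ((⟨v, hvT⟩ : T), true)) := by
    intro h
    rw [Sym2.eq_iff] at h
    rcases h with ⟨hh1, hh2⟩ | ⟨hh1, hh2⟩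
    · exact Bool.false_ne_true (congrArg Prod.snd hh2)
    · exact Bool.false_ne_true (congrArg Prod.snd hh1)
  have h2 : s(((a : ↥T), true), ((b : ↥T), true))
      ≠ s(((⟨v, hvT⟩ : T), false), ((⟨v, hvT⟩ : T), true)) := by
    intro h
    rw [Sym2.eq_iff] at h
    rcases h with ⟨hh1, hh2⟩ | ⟨hh1, hh2⟩
    · exact Bool.false_ne_true (congrArg Prod.snd hh1).symm
    · exact Bool.false_ne_true (congrArg Prod.snd hh2).symm
  rw [if_neg h1, if_neg h2, Sym2.map_pair_eq, Sym2.map_pair_eq]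
  exact hsym a.1 b.1 hab

lemma sum_powerset_image {α β : Type*} [DecidableEq α] [DecidableEq β] {f : α → β}
    (hf : Function.Injective f) (s : Finset α) {M : Type*} [AddCommMonoid M]
    (g : Finset β → M) :
    ∑ K ∈ s.powerset, g (K.image f) = ∑ K' ∈ (s.image f).powerset, g K' := by
  refine Finset.sum_nbij' (fun K => K.image f)
    (fun K' => s.filter (fun e => f e ∈ K')) ?_ ?_ ?_ ?_ ?_
  · intro K hK
    exact Finset.mem_powerset.mpr (Finset.image_subset_image (Finset.mem_powerset.mp hK))
  · intro K' hK'
    exact Finset.mem_powerset.mpr (Finset.filter_subset _ _)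
  · intro K hK
    rw [Finset.mem_powerset] at hK
    ext e
    simp only [Finset.mem_filter, Finset.mem_image]
    constructor
    · rintro ⟨hes, e', he', heq⟩
      rwa [← hf heq]
    · intro he
      exact ⟨hK he, e, he, rfl⟩
  · intro K' hK'
    rw [Finset.mem_powerset] at hK'
    ext b
    simp only [Finset.mem_image, Finset.mem_filter]
    constructor
    · rintro ⟨e, ⟨hes, hfe⟩, rfl⟩
      exact hfe
    · intro hb
      obtain ⟨e, hes, rfl⟩ := Finset.mem_image.mp (hK' hb)
      exact ⟨e, ⟨hes, hb⟩, rfl⟩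
  · intro K hK
    rfl

lemma inner_transfer {V : Type*} [Fintype V] (Fbar : SimpleGraph V) (v : V) (T : Set V)
    (μ : Sym2 (V × Bool) → ℝ) (hvT : v ∈ T)
    (c : ℝ) (D : Finset (Sym2 (V × Bool)))
    (hcD : (c = 1 ∧ D = {s((v, false), (v, true))}) ∨ (c = 0 ∧ D = ∅))
    (x y : V) (hx : x ∈ T) (hy : y ∈ T) (b : Bool) :
    percProb (BB (Fbar.induce T)) (nuW T v hvT μ c)
        (fun K => ConnIn K ((⟨x, hx⟩ : T), false) ((⟨y, hy⟩ : T), b))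
      = ∑ K2 ∈ (edgeFin (bbSideDel Fbar T v)).powerset,
          (if ConnIn (eUnion K2 D) (x, false) (y, b)
            then percWeight (bbSideDel Fbar T v) μ K2 else 0) := by
  letI : DecidableEq (V × Bool) := fun a b => Classical.propDecidable _
  letI : DecidableEq (↥T × Bool) := fun a b => Classical.propDecidable _
  have hinj : Function.Injective (iotaT T) := iotaT_inj T
  have hinj2 : Function.Injective (Sym2.map (iotaT T)) := Sym2.map.injective hinj
  set veS : Sym2 (↥T × Bool) := s(((⟨v, hvT⟩ : T), false), ((⟨v, hvT⟩ : T), true)) with hveS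
  have hveim : Sym2.map (iotaT T) veS = s((v, false), (v, true)) := by
    rw [hveS, Sym2.map_pair_eq]
    rfl
  have hveS_mem : veS ∈ edgeFin (BB (Fbar.induce T)) := by
    rw [hveS, mem_edgeFin_pair]
    exact SimpleGraph.boxProd_adj.mpr (Or.inr ⟨by simp, rfl⟩)
  set EH' := eErase (edgeFin (BB (Fbar.induce T))) veS with hEH'
  have hveS_not : veS ∉ EH' := Finset.notMem_erase _ _
  have hins : edgeFin (BB (Fbar.induce T)) = eInsert veS EH' :=
    (Finset.insert_erase hveS_mem).symm
  have hE2 : edgeFin (bbSideDel Fbar T v) = eImageS (iotaT T) EH' := by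
    rw [edgeFin_bbSideDel, ← image_edgeFin_eq Fbar T, ← hveim, hEH']
    exact (Finset.image_erase hinj2 _ _).symm
  have hνve : nuW T v hvT μ c veS = c := by
    rw [hveS]
    simp [nuW]
  have hνe : ∀ e ∈ EH', nuW T v hvT μ c e = μ (Sym2.map (iotaT T) e) := by
    intro e he
    rw [hEH'] at he
    unfold nuW
    rw [if_neg (Finset.ne_of_mem_erase he)]
  have hprods : ∀ K : Finset (Sym2 (↥T × Bool)), K ⊆ EH' →
      (∏ e ∈ K, nuW T v hvT μ c e) * ∏ e ∈ EH' \ K, (1 - nuW T v hvT μ c e)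
        = percWeight (bbSideDel Fbar T v) μ (eImageS (iotaT T) K) := by
    intro K hK
    unfold percWeight
    congr 1
    · rw [Finset.prod_image (fun a _ b _ h => hinj2 h)]
      exact Finset.prod_congr rfl (fun e he => hνe e (hK he))
    · rw [hE2, ← Finset.image_sdiff _ _ hinj2,
        Finset.prod_image (fun a _ b _ h => hinj2 h)]
      exact Finset.prod_congr rfl
        (fun e he => by rw [hνe e (Finset.sdiff_subset he)])
  have hW1 : ∀ K : Finset (Sym2 (↥T × Bool)), K ⊆ EH' →
      percWeight (BB (Fbar.induce T)) (nuW T v hvT μ c) K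
        = (1 - c) * percWeight (bbSideDel Fbar T v) μ (eImageS (iotaT T) K) := by
    intro K hK
    have hveK : veS ∉ K := fun h => hveS_not (hK h)
    have hnot : veS ∉ EH' \ K := fun h => hveS_not (Finset.mem_sdiff.mp h).1
    rw [← hprods K hK]
    unfold percWeight
    rw [hins]
    rw [Finset.insert_sdiff_of_notMem _ hveK, Finset.prod_insert hnot, hνve]
    ring
  have hW2 : ∀ K : Finset (Sym2 (↥T × Bool)), K ⊆ EH' →
      percWeight (BB (Fbar.induce T)) (nuW T v hvT μ c) (eInsert veS K)
        = c * percWeight (bbSideDel Fbar T v) μ (eImageS (iotaT T) K) := by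
    intro K hK
    have hveK : veS ∉ K := fun h => hveS_not (hK h)
    have hsd : eInsert veS EH' \ eInsert veS K = EH' \ K := by
      ext e
      simp only [Finset.mem_sdiff, Finset.mem_insert, not_or]
      constructor
      · rintro ⟨h1 | h1, h2, h3⟩
        · exact absurd h1 h2
        · exact ⟨h1, h3⟩
      · rintro ⟨h1, h3⟩
        exact ⟨Or.inr h1, fun he => hveS_not (he ▸ h1), h3⟩
    rw [← hprods K hK]
    unfold percWeight
    rw [hins, hsd, Finset.prod_insert hveK, hνve]
    ring
  have hC : ∀ (K Dsub : Finset (Sym2 (↥T × Bool))),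
      eImageS (iotaT T) Dsub = D →
      (ConnIn (eUnion K Dsub) ((⟨x, hx⟩ : T), false) ((⟨y, hy⟩ : T), b) ↔
        ConnIn (eUnion (eImageS (iotaT T) K) D) (x, false) (y, b)) := by
    intro K Dsub hDsub
    rw [← hDsub]
    have h2 : eImageS (iotaT T) (eUnion K Dsub)
        = eUnion (eImageS (iotaT T) K) (eImageS (iotaT T) Dsub) :=
      Finset.image_union _ _
    rw [← h2]
    exact (connIn_image_iff hinj (eUnion K Dsub)
      ((⟨x, hx⟩ : T), false) ((⟨y, hy⟩ : T), b)).symm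
  unfold percProb
  rw [hins, Finset.sum_powerset_insert hveS_not]
  rcases hcD with ⟨rfl, hD⟩ | ⟨rfl, hD⟩
  · -- c = 1
    have hz : ∀ K ∈ EH'.powerset,
        (if ConnIn K ((⟨x, hx⟩ : T), false) ((⟨y, hy⟩ : T), b)
          then percWeight (BB (Fbar.induce T)) (nuW T v hvT μ 1) K else 0) = 0 := by
      intro K hK
      rw [hW1 K (Finset.mem_powerset.mp hK)]
      simp
    rw [Finset.sum_eq_zero hz, zero_add]
    have ht : ∀ K ∈ EH'.powerset,
        (if ConnIn (eInsert veS K) ((⟨x, hx⟩ : T), false) ((⟨y, hy⟩ : T), b)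
          then percWeight (BB (Fbar.induce T)) (nuW T v hvT μ 1) (eInsert veS K) else 0)
        = (if ConnIn (eUnion (eImageS (iotaT T) K) D) (x, false) (y, b)
            then percWeight (bbSideDel Fbar T v) μ (eImageS (iotaT T) K) else 0) := by
      intro K hK
      rw [Finset.mem_powerset] at hK
      rw [hW2 K hK, one_mul]
      have hiff := hC K {veS} (by rw [show eImageS (iotaT T) {veS} = {Sym2.map (iotaT T) veS}
          from Finset.image_singleton _ _, hveim, hD])
      rw [show eInsert veS K = eUnion K {veS} from by
        ext e; simp [or_comm]]
      by_cases hcon : ConnIn (eUnion K {veS}) ((⟨x, hx⟩ : T), false) ((⟨y, hy⟩ : T), b)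
      · rw [if_pos hcon, if_pos (hiff.mp hcon)]
      · rw [if_neg hcon, if_neg (fun hcc => hcon (hiff.mpr hcc))]
    rw [Finset.sum_congr rfl ht, hE2,
      ← sum_powerset_image hinj2 EH' (fun K2 =>
        if ConnIn (eUnion K2 D) (x, false) (y, b)
          then percWeight (bbSideDel Fbar T v) μ K2 else 0)]
  · -- c = 0
    have hz : ∀ K ∈ EH'.powerset,
        (if ConnIn (eInsert veS K) ((⟨x, hx⟩ : T), false) ((⟨y, hy⟩ : T), b)
          then percWeight (BB (Fbar.induce T)) (nuW T v hvT μ 0) (eInsert veS K) else 0) = 0 := by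
      intro K hK
      rw [hW2 K (Finset.mem_powerset.mp hK)]
      simp
    rw [Finset.sum_eq_zero hz, add_zero]
    have ht : ∀ K ∈ EH'.powerset,
        (if ConnIn K ((⟨x, hx⟩ : T), false) ((⟨y, hy⟩ : T), b)
          then percWeight (BB (Fbar.induce T)) (nuW T v hvT μ 0) K else 0)
        = (if ConnIn (eUnion (eImageS (iotaT T) K) D) (x, false) (y, b)
            then percWeight (bbSideDel Fbar T v) μ (eImageS (iotaT T) K) else 0) := by
      intro K hK
      rw [Finset.mem_powerset] at hK
      rw [hW1 K hK, sub_zero, one_mul]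
      have hiff := hC K ∅ (by rw [show eImageS (iotaT T) (∅ : Finset (Sym2 (↥T × Bool))) = ∅
          from Finset.image_empty _, hD])
      rw [show (eUnion K (∅ : Finset (Sym2 (↥T × Bool)))) = K
          from Finset.union_empty K] at hiff
      by_cases hcon : ConnIn K ((⟨x, hx⟩ : T), false) ((⟨y, hy⟩ : T), b)
      · rw [if_pos hcon, if_pos (hiff.mp hcon)]
      · rw [if_neg hcon, if_neg (fun hcc => hcon (hiff.mpr hcc))]
    rw [Finset.sum_congr rfl ht, hE2,
      ← sum_powerset_image hinj2 EH' (fun K2 =>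
        if ConnIn (eUnion K2 D) (x, false) (y, b)
          then percWeight (bbSideDel Fbar T v) μ K2 else 0)]

/-- First case: if H̄ satisfies the bunkbed conjecture and x, y are both vertices of H̄,
then P_{F,μ}(x⁻ ∼ y⁺) ≤ P_{F,μ}(x⁻ ∼ y⁻) for every symmetric weight μ on F. -/
theorem bunkbed_same_side {V : Type*} [Fintype V]
    (Fbar : SimpleGraph V) (v : V) (S T : Set V)
    (hcut : IsCutVertex Fbar v)
    (hST : S ∩ T = {v}) (hUnion : S ∪ T = Set.univ)
    (hSep : ∀ x ∈ S, ∀ y ∈ T, Fbar.Adj x y → x = v ∨ y = v)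
    (hH : SatisfiesBunkbed (Fbar.induce T))
    (μ : Sym2 (V × Bool) → ℝ) (hμ : IsWeight (BB Fbar) μ) (hsym : IsSymWeight Fbar μ)
    (x y : V) (hx : x ∈ T) (hy : y ∈ T) :
    percProb (BB Fbar) μ (fun K => ConnIn K (x, false) (y, true)) ≤
      percProb (BB Fbar) μ (fun K => ConnIn K (x, false) (y, false)) := by
  letI : DecidableEq (V × Bool) := fun a b => Classical.propDecidable _
  have hv : v ∈ S ∩ T := by rw [hST]; rfl
  obtain ⟨hvS, hvT⟩ := hv
  have hpart : edgeFin (BB Fbar)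
      = eUnion (edgeFin (bbSide Fbar S)) (edgeFin (bbSideDel Fbar T v)) :=
    edge_partition hST hUnion hSep hvS hvT
  have hdisj : Disjoint (edgeFin (bbSide Fbar S)) (edgeFin (bbSideDel Fbar T v)) :=
    edge_disjoint hST
  have hsub1 : edgeFin (bbSide Fbar S) ⊆ edgeFin (BB Fbar) := by
    rw [hpart]; exact Finset.subset_union_left
  have hsub2 : edgeFin (bbSideDel Fbar T v) ⊆ edgeFin (BB Fbar) := by
    rw [hpart]; exact Finset.subset_union_right
  have hK1S : ∀ K1 : Finset (Sym2 (V × Bool)), K1 ⊆ edgeFin (bbSide Fbar S) →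
      ∀ a b : V × Bool, s(a, b) ∈ K1 → a.1 ∈ S ∧ b.1 ∈ S := by
    intro K1 hsub a b hmem
    have h := mem_edgeFin_pair.mp (hsub hmem)
    exact ⟨h.2.1, h.2.2⟩
  have hK2T : ∀ K2 : Finset (Sym2 (V × Bool)), K2 ⊆ edgeFin (bbSideDel Fbar T v) →
      ∀ a b : V × Bool, s(a, b) ∈ K2 → a.1 ∈ T ∧ b.1 ∈ T := by
    intro K2 hsub a b hmem
    have h := bbSideDel_adj.mp (mem_edgeFin_pair.mp (hsub hmem))
    exact ⟨h.1.2.1, h.1.2.2⟩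
  set Dfun : Finset (Sym2 (V × Bool)) → Finset (Sym2 (V × Bool)) := fun K1 =>
    if ConnIn K1 (v, false) (v, true)
      then {s((v, false), (v, true))} else ∅ with hDfun
  set cfun : Finset (Sym2 (V × Bool)) → ℝ := fun K1 =>
    if ConnIn K1 (v, false) (v, true) then 1 else 0 with hcfun
  have key : ∀ b : Bool,
      percProb (BB Fbar) μ (fun K => ConnIn K (x, false) (y, b))
        = ∑ K1 ∈ (edgeFin (bbSide Fbar S)).powerset, percWeight (bbSide Fbar S) μ K1 *
            ∑ K2 ∈ (edgeFin (bbSideDel Fbar T v)).powerset,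
              (if ConnIn (eUnion K2 (Dfun K1)) (x, false) (y, b)
                then percWeight (bbSideDel Fbar T v) μ K2 else 0) := by
    intro b
    unfold percProb
    rw [hpart, sum_powerset_eUnion_disj hdisj]
    refine Finset.sum_congr rfl ?_
    intro K1 hK1
    rw [Finset.mem_powerset] at hK1
    rw [Finset.mul_sum]
    refine Finset.sum_congr rfl ?_
    intro K2 hK2
    rw [Finset.mem_powerset] at hK2
    have hiff := cross_conn hST hUnion K1 K2 (hK1S K1 hK1) (hK2T K2 hK2) (Dfun K1)
      (fun h => by rw [hDfun]; exact if_pos h)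
      (fun h => by rw [hDfun]; exact if_neg h)
      (show ((x, false) : V × Bool).1 ∈ T from hx)
      (show ((y, b) : V × Bool).1 ∈ T from hy)
    by_cases hcon : ConnIn (eUnion K1 K2) (x, false) (y, b)
    · rw [if_pos hcon, if_pos (hiff.mp hcon),
        percWeight_union_eq hpart hdisj μ hK1 hK2]
    · rw [if_neg hcon, if_neg (fun hcc => hcon (hiff.mpr hcc)), mul_zero]
  rw [key true, key false]
  apply Finset.sum_le_sum
  intro K1 hK1mem
  rw [Finset.mem_powerset] at hK1mem
  have hw1 : 0 ≤ percWeight (bbSide Fbar S) μ K1 :=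
    percWeight_nonneg hsub1 hμ hK1mem
  refine mul_le_mul_of_nonneg_left ?_ hw1
  have hcd : (cfun K1 = 1 ∧ Dfun K1 = {s((v, false), (v, true))})
      ∨ (cfun K1 = 0 ∧ Dfun K1 = ∅) := by
    by_cases hR : ConnIn K1 (v, false) (v, true)
    · exact Or.inl ⟨if_pos hR, if_pos hR⟩
    · exact Or.inr ⟨if_neg hR, if_neg hR⟩
  have h01 : 0 ≤ cfun K1 ∧ cfun K1 ≤ 1 := by
    rcases hcd with ⟨h, _⟩ | ⟨h, _⟩ <;> rw [h] <;> norm_num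
  rw [← inner_transfer Fbar v T μ hvT (cfun K1) (Dfun K1) hcd x y hx hy true,
    ← inner_transfer Fbar v T μ hvT (cfun K1) (Dfun K1) hcd x y hx hy false]
  exact hH (nuW T v hvT μ (cfun K1))
    (nuW_isWeight Fbar T v hvT μ hμ _ h01)
    (nuW_isSym Fbar T v hvT μ hsym _) ⟨x, hx⟩ ⟨y, hy⟩
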